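/- arXiv:1008.1894 — 2 statements merged into one kernel-verified Lean document; each statement's English description precedes it below -/
import Mathlib

section
/- For every n ∈ ℕ, every x ∈ ℝ, and every h ∈ ℂ with Re(h) > 1, the (h,q)-Bernoulli polynomial tends to the ordinary Bernoulli polynomial as q → 1 from the left: lim_{q→1⁻} β_{n,q}^h(x) = B_n(x), where B_n is the n-th Bernoulli polynomial (with generating function t·e^{xt}/(e^t − 1) = Σ_{n≥0} B_n(x) t^n/n!). -/
/-!
With `s = log q`, the summand of index `l` in `β_{n,q}^h(x)` equals, up to the common factor
`(q - 1)/s · e^{x(1-h)s}`, which tends to `1`, the value `F((h - 1 + l) s)` of the Bernoulli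
generating function `F(z) = z e^{xz}/(e^z - 1)`. Hence `β_{n,q}^h(x)` is essentially the `n`-th
forward difference of `r ↦ F(r s)` at `h - 1` divided by `s^n`. For a function analytic at `0`
this quotient tends to the `n`-th derivative at `0`: the Taylor polynomial of degree `n`
contributes exactly `F^{(n)}(0) s^n` and the remainder is `O(s^{n+1})`. Finally
`F^{(n)}(0) = B_n(x)`, since differentiating `F(z) (e^z - 1) = z e^{xz}` gives the recursion
`∑_{i ≤ k} C(k+1, i) B_i(x) = (k + 1) x^k` that determines the Bernoulli polynomials.
-/

open Complex Finset Filter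

/-- Complex power `q^z := exp(z·log q)` for a real base `q`. -/
noncomputable def qcpow (q : ℝ) (z : ℂ) : ℂ := Complex.exp (z * (Real.log q : ℂ))

/-- The complex `q`-number `[z]_q = (1 - q^z)/(1 - q)`. -/
noncomputable def qnum (q : ℝ) (z : ℂ) : ℂ := (1 - qcpow q z) / (1 - (q : ℂ))

/-- The real `q`-number `[y]_q = (1 - q^y)/(1 - q)` for real `y`. -/
noncomputable def qnumR (q : ℝ) (y : ℝ) : ℝ := (1 - Real.exp (y * Real.log q)) / (1 - q)

/-- The `(h,q)`-Bernoulli polynomial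
`β_{n,q}^h(x) = (1-q)^{-n} ∑_{l=0}^{n} C(n,l) (-1)^l q^{lx} (l+h-1)/[l+h-1]_q`. -/
noncomputable def qbeta (q : ℝ) (h : ℂ) (n : ℕ) (x : ℝ) : ℂ :=
  (1 - (q : ℂ))⁻¹ ^ n * ∑ l ∈ Finset.range (n + 1),
    (n.choose l : ℂ) * (-1) ^ l * qcpow q ((l : ℂ) * (x : ℂ)) *
      (((l : ℂ) + h - 1) / qnum q ((l : ℂ) + h - 1))

open Asymptotics Topology Nat fwdDiff

theorem neg_one_pow_mul_fwdDiff_iter_eq_sum {R : Type*} [CommRing R] (f : R → R) (n : ℕ)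
    (y : R) :
    (-1) ^ n * (Δ_[1])^[n] f y = ∑ l ∈ range (n + 1), (-1) ^ l * n.choose l * f (y + l) := by
  rw [fwdDiff_iter_eq_sum_shift, mul_sum]
  refine sum_congr rfl fun l hl => ?_
  obtain ⟨m, rfl⟩ := Nat.exists_eq_add_of_le (mem_range_succ_iff.1 hl)
  simp only [zsmul_eq_mul, nsmul_eq_mul, mul_one, Int.cast_mul, Int.cast_pow, Int.cast_neg,
    Int.cast_one, Int.cast_natCast, Nat.add_sub_cancel_left, pow_add]
  have hsq : ((-1 : R) ^ m) * (-1) ^ m = 1 := by rw [← mul_pow, neg_one_mul, neg_neg, one_pow]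
  linear_combination (-1) ^ l * (l + m).choose l * f (y + l) * hsq

theorem fwdDiff_iter_sum_mul_pow_mul {R : Type*} [CommRing R] (a : ℕ → R) (n : ℕ) (t c : R) :
    (Δ_[1])^[n] (fun r => ∑ k ∈ range (n + 1), a k * (r * t) ^ k) c = n ! * a n * t ^ n := by
  have hsplit : (fun r => ∑ k ∈ range (n + 1), a k * (r * t) ^ k) =
      (fun r => ∑ k ∈ range n, (a k * t ^ k) * r ^ k) + (a n * t ^ n) • fun r => r ^ n := by
    ext r
    simp only [sum_range_succ, mul_pow, Pi.add_apply, Pi.smul_apply, smul_eq_mul]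
    congr 1
    · exact sum_congr rfl fun k _ => by ring
    · ring
  rw [hsplit, fwdDiff_iter_add, fwdDiff_iter_sum_mul_pow_eq_zero, fwdDiff_iter_const_smul,
    fwdDiff_iter_eq_factorial]
  simp only [Pi.add_apply, Pi.zero_apply, Pi.smul_apply, Pi.natCast_apply, smul_eq_mul, zero_add]
  ring

section FiniteDifferences

variable {𝕜 : Type*} [NontriviallyNormedField 𝕜]

theorem AnalyticAt.isBigO_sub_sum_iteratedDeriv [CompleteSpace 𝕜] [CharZero 𝕜] {F : 𝕜 → 𝕜}
    (hF : AnalyticAt 𝕜 F 0) (n : ℕ) :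
    (fun z => F z - ∑ k ∈ range n, iteratedDeriv k F 0 / k ! * z ^ k) =O[𝓝 0]
      fun z => ‖z‖ ^ n := by
  simpa [FormalMultilinearSeries.partialSum, FormalMultilinearSeries.ofScalars_apply_eq,
    mul_comm] using hF.hasFPowerSeriesAt.isBigO_sub_partialSum_pow n

theorem Asymptotics.IsBigO.fwdDiff_iter_comp_mul {R : 𝕜 → 𝕜} {m : ℕ}
    (hR : R =O[𝓝 0] fun z => ‖z‖ ^ m) (n : ℕ) (c : 𝕜) :
    (fun t => (Δ_[1])^[n] (fun r => R (r * t)) c) =O[𝓝 0] fun t => ‖t‖ ^ m := by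
  simp only [fwdDiff_iter_eq_sum_shift, zsmul_eq_mul, nsmul_eq_mul, mul_one]
  refine IsBigO.fun_sum fun l _ => ?_
  refine IsBigO.const_mul_left ?_ _
  have hlin : Tendsto (fun t : 𝕜 => (c + l) * t) (𝓝 0) (𝓝 0) := by
    simpa using (continuous_const_mul (c + l)).tendsto 0
  refine (hR.comp_tendsto hlin).trans (IsBigO.of_bound (‖c + l‖ ^ m) ?_)
  exact Eventually.of_forall fun t => by simp [mul_pow]

theorem AnalyticAt.tendsto_fwdDiff_iter_comp_mul_div_pow [CompleteSpace 𝕜] [CharZero 𝕜]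
    {F : 𝕜 → 𝕜} (hF : AnalyticAt 𝕜 F 0) (n : ℕ) (c : 𝕜) :
    Tendsto (fun t => (Δ_[1])^[n] (fun r => F (r * t)) c / t ^ n) (𝓝[≠] 0)
      (𝓝 (iteratedDeriv n F 0)) := by
  set R := fun z => F z - ∑ k ∈ range (n + 1), iteratedDeriv k F 0 / k ! * z ^ k
  have hdecomp : ∀ t, (Δ_[1])^[n] (fun r => F (r * t)) c =
      iteratedDeriv n F 0 * t ^ n + (Δ_[1])^[n] (fun r => R (r * t)) c := by
    intro t
    have : (fun r => F (r * t)) = (fun r => ∑ k ∈ range (n + 1),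
        iteratedDeriv k F 0 / k ! * (r * t) ^ k) + fun r => R (r * t) := by
      ext r; simp [R]
    rw [this, fwdDiff_iter_add, Pi.add_apply, fwdDiff_iter_sum_mul_pow_mul]
    have hfact : (n ! : 𝕜) ≠ 0 := by exact_mod_cast n.factorial_ne_zero
    rw [mul_div_cancel₀ _ hfact]
  have hrem : Tendsto (fun t => (Δ_[1])^[n] (fun r => R (r * t)) c / t ^ n) (𝓝 0) (𝓝 0) :=
    ((hF.isBigO_sub_sum_iteratedDeriv (n + 1)).fwdDiff_iter_comp_mul n c
      |>.trans_isLittleO (by simpa using (isLittleO_pow_pow (𝕜 := 𝕜) n.lt_succ_self).norm_left)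
      ).tendsto_div_nhds_zero
  refine ((tendsto_const_nhds.add (hrem.mono_left nhdsWithin_le_nhds)).congr' ?_).trans
    (by rw [add_zero])
  filter_upwards [self_mem_nhdsWithin] with t ht
  rw [hdecomp, add_div, mul_div_cancel_right₀ _ (pow_ne_zero n ht)]

end FiniteDifferences

noncomputable def expSubOneDiv : ℂ → ℂ := dslope (fun z => exp z - 1) 0

theorem expSubOneDiv_zero : expSubOneDiv 0 = 1 := by
  simp [expSubOneDiv, dslope_same]

theorem mul_expSubOneDiv (z : ℂ) : z * expSubOneDiv z = exp z - 1 := by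
  simpa [expSubOneDiv] using sub_smul_dslope (fun z => exp z - 1) 0 z

theorem analyticAt_expSubOneDiv : AnalyticAt ℂ expSubOneDiv 0 := by
  obtain ⟨p, hp⟩ : AnalyticAt ℂ (fun z => exp z - 1) 0 := by fun_prop
  exact hp.has_fpower_series_dslope_fslope.analyticAt

theorem expSubOneDiv_ne_zero {z : ℂ} (hz : exp z ≠ 1) : expSubOneDiv z ≠ 0 := by
  intro h0
  have := mul_expSubOneDiv z
  rw [h0, mul_zero] at this
  exact hz (sub_eq_zero.mp this.symm)

/-- `z e^{xz} / (e^z - 1)`, in a form that is visibly analytic at `0`. -/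
noncomputable def bernoulliGen (x z : ℂ) : ℂ := exp (x * z) / expSubOneDiv z

theorem analyticAt_bernoulliGen (x : ℂ) : AnalyticAt ℂ (bernoulliGen x) 0 :=
  (analyticAt_cexp.comp (by fun_prop)).div analyticAt_expSubOneDiv
    (by simp [expSubOneDiv_zero])

theorem bernoulliGen_mul_exp_sub_one (x : ℂ) :
    (fun z => bernoulliGen x z * (exp z - 1)) =ᶠ[𝓝 0] fun z => z * exp (x * z) := by
  have h0 : expSubOneDiv 0 ≠ 0 := by simp [expSubOneDiv_zero]
  filter_upwards [analyticAt_expSubOneDiv.continuousAt.eventually_ne h0] with z hz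
  rw [bernoulliGen, ← mul_expSubOneDiv]
  field_simp

theorem iteratedDeriv_exp_sub_one_zero (i : ℕ) :
    iteratedDeriv i (fun z => exp z - 1) 0 = if i = 0 then 0 else 1 := by
  have hexp : iteratedDeriv i exp 0 = 1 := by
    simpa using congrFun (iteratedDeriv_cexp_const_mul i 1) 0
  rw [iteratedDeriv_fun_sub (by fun_prop) (by fun_prop), iteratedDeriv_const, hexp]
  split_ifs <;> simp

theorem sum_choose_mul_iteratedDeriv_bernoulliGen (x : ℂ) (k : ℕ) :
    ∑ i ∈ range (k + 1), ((k + 1).choose i : ℂ) * iteratedDeriv i (bernoulliGen x) 0 =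
      (k + 1) * x ^ k := by
  have key := ((bernoulliGen_mul_exp_sub_one x).iteratedDeriv (k + 1)).eq_of_nhds
  rw [iteratedDeriv_fun_mul (analyticAt_bernoulliGen x).contDiffAt (by fun_prop),
    iteratedDeriv_fun_mul (by fun_prop) (by fun_prop), sum_range_succ] at key
  rw [sum_congr rfl fun i hi => by
    rw [iteratedDeriv_exp_sub_one_zero, if_neg (by have := mem_range.1 hi; omega), mul_one]] at key
  simpa [iteratedDeriv_exp_sub_one_zero, iteratedDeriv_fun_id_zero] using key

theorem sum_choose_mul_eval_bernoulli (x : ℂ) (k : ℕ) :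
    ∑ i ∈ range (k + 1), ((k + 1).choose i : ℂ) *
      ((Polynomial.bernoulli i).map (algebraMap ℚ ℂ)).eval x = (k + 1) * x ^ k := by
  have h := congrArg (Polynomial.aeval x) (Polynomial.sum_bernoulli k)
  simp only [map_sum, map_smul, Polynomial.aeval_monomial, Rat.smul_def, Rat.cast_natCast,
    eq_ratCast, Rat.cast_add, Rat.cast_one] at h
  simpa [Polynomial.eval_map_algebraMap] using h

theorem iteratedDeriv_bernoulliGen (x : ℂ) (n : ℕ) :
    iteratedDeriv n (bernoulliGen x) 0 =
      ((Polynomial.bernoulli n).map (algebraMap ℚ ℂ)).eval x := by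
  induction n using Nat.strong_induction_on with
  | _ k ih =>
    have h := (sum_choose_mul_iteratedDeriv_bernoulliGen x k).trans
      (sum_choose_mul_eval_bernoulli x k).symm
    rw [sum_range_succ, sum_range_succ, sum_congr rfl fun i hi => by rw [ih i (mem_range.1 hi)],
      add_left_cancel_iff, Nat.choose_succ_self_right] at h
    exact mul_left_cancel₀ (by norm_cast) h

theorem exp_ne_one_of_re_ne_zero {z : ℂ} (hz : z.re ≠ 0) : exp z ≠ 1 := by
  intro h
  have := congrArg norm h
  rw [norm_exp, norm_one, Real.exp_eq_one_iff] at this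
  exact hz this

theorem div_qnum_eq_div_expSubOneDiv {q : ℝ} (hq : q ∈ Set.Ioo 0 1) {w : ℂ} (hw : 0 < w.re) :
    w / qnum q w = ((q : ℂ) - 1) / Real.log q / expSubOneDiv (w * Real.log q) := by
  have hlog : Real.log q < 0 := Real.log_neg hq.1 hq.2
  have hs : (Real.log q : ℂ) ≠ 0 := by exact_mod_cast hlog.ne
  have hw0 : w ≠ 0 := fun h => by simp [h] at hw
  have hq1 : (1 : ℂ) - q ≠ 0 := sub_ne_zero.2 (by exact_mod_cast hq.2.ne')
  have hE : expSubOneDiv (w * Real.log q) ≠ 0 := expSubOneDiv_ne_zero <|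
    exp_ne_one_of_re_ne_zero (by simpa using (mul_neg_of_pos_of_neg hw hlog).ne)
  rw [qnum, qcpow, ← neg_sub, ← mul_expSubOneDiv]
  field_simp
  ring

theorem qbeta_eq_fwdDiff_iter {q : ℝ} (hq : q ∈ Set.Ioo 0 1) {h : ℂ} (hh : 1 < h.re) (n : ℕ)
    (x : ℝ) :
    qbeta q h n x =
      ((Real.log q : ℂ) / (q - 1)) ^ n * ((Real.log q : ℂ) / (q - 1))⁻¹ *
        exp (x * (1 - h) * Real.log q) *
        ((Δ_[1])^[n] (fun r => bernoulliGen x (r * Real.log q)) (h - 1) / (Real.log q) ^ n) := by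
  have hs : (Real.log q : ℂ) ≠ 0 := by exact_mod_cast (Real.log_neg hq.1 hq.2).ne
  have hq1 : (q : ℂ) - 1 ≠ 0 := sub_ne_zero.2 (by exact_mod_cast hq.2.ne)
  have hterm : ∀ l ∈ range (n + 1), (n.choose l : ℂ) * (-1) ^ l * qcpow q (l * x) *
      ((l + h - 1) / qnum q (l + h - 1)) =
      ((Real.log q : ℂ) / (q - 1))⁻¹ * exp (x * (1 - h) * Real.log q) *
        ((-1) ^ l * n.choose l * bernoulliGen x ((h - 1 + l) * Real.log q)) := by
    intro l _
    have hw : 0 < ((l : ℂ) + h - 1).re := by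
      simp only [sub_re, add_re, natCast_re, one_re]
      linarith [l.cast_nonneg (α := ℝ)]
    rw [div_qnum_eq_div_expSubOneDiv hq hw, qcpow, bernoulliGen,
      show (l : ℂ) * x * Real.log q = x * (1 - h) * Real.log q + x * ((h - 1 + l) * Real.log q)
        by ring, exp_add]
    field_simp
    ring_nf
  have hsum := neg_one_pow_mul_fwdDiff_iter_eq_sum (fun r => bernoulliGen x (r * Real.log q)) n
    (h - 1)
  rw [qbeta, sum_congr rfl hterm, ← mul_sum, ← hsum]
  have hsign : (1 - (q : ℂ))⁻¹ ^ n * (-1) ^ n =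
      ((Real.log q : ℂ) / (q - 1)) ^ n / (Real.log q : ℂ) ^ n := by
    have hq1' : (1 : ℂ) - q ≠ 0 := by rwa [← neg_sub, neg_ne_zero]
    rw [← mul_pow, ← div_pow]
    congr 1
    field_simp
    ring
  linear_combination ((Real.log q : ℂ) / (q - 1))⁻¹ * exp (x * (1 - h) * Real.log q) *
    (Δ_[1])^[n] (fun r => bernoulliGen x (r * Real.log q)) (h - 1) * hsign

theorem tendsto_ofReal_log_nhdsNE_one :
    Tendsto (fun q : ℝ => (Real.log q : ℂ)) (𝓝[≠] 1) (𝓝[≠] 0) := by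
  refine tendsto_nhdsWithin_iff.2 ⟨?_, ?_⟩
  · simpa [Function.comp_def] using ((continuous_ofReal.tendsto _).comp
      (Real.continuousAt_log one_ne_zero)).mono_left nhdsWithin_le_nhds
  · filter_upwards [self_mem_nhdsWithin, nhdsWithin_le_nhds (eventually_gt_nhds one_pos)]
      with q hq1 hq0
    simpa using Real.log_ne_zero_of_pos_of_ne_one hq0 hq1

theorem tendsto_log_div_sub_one_nhdsNE_one :
    Tendsto (fun q : ℝ => (Real.log q : ℂ) / (q - 1)) (𝓝[≠] 1) (𝓝 1) := by
  have hslope := (Real.hasDerivAt_log one_ne_zero).tendsto_slope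
  simp only [inv_one] at hslope
  refine ((continuous_ofReal.tendsto 1).comp hslope).congr fun q => ?_
  simp [slope_def_field]

/-- as `q → 1⁻` (along `0 < q < 1`), the `(h,q)`-Bernoulli polynomial
`β_{n,q}^h(x)` tends to the ordinary Bernoulli polynomial `B_n(x)`. -/
theorem qbeta_tendsto_bernoulli (h : ℂ) (hh : 1 < h.re) (n : ℕ) (x : ℝ) :
    Filter.Tendsto (fun q : ℝ => qbeta q h n x)
      (nhdsWithin 1 (Set.Ioo (0 : ℝ) 1))
      (nhds (Polynomial.eval (x : ℂ)
        (Polynomial.map (algebraMap ℚ ℂ) (Polynomial.bernoulli n)))) := by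
  have hleft : 𝓝[Set.Ioo 0 1] (1 : ℝ) ≤ 𝓝[≠] 1 := nhdsWithin_mono _ fun q hq => hq.2.ne
  have hA := tendsto_log_div_sub_one_nhdsNE_one.mono_left hleft
  have hs := tendsto_ofReal_log_nhdsNE_one.mono_left hleft
  have hprefactor := (hA.pow n).mul (hA.inv₀ one_ne_zero)
  have hexp := ((hs.mono_right nhdsWithin_le_nhds).const_mul ((x : ℂ) * (1 - h))).cexp
  rw [mul_zero, exp_zero] at hexp
  have hdiff :=
    ((analyticAt_bernoulliGen x).tendsto_fwdDiff_iter_comp_mul_div_pow n (h - 1)).comp hs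
  rw [iteratedDeriv_bernoulliGen] at hdiff
  have hlim := (hprefactor.mul hexp).mul hdiff
  simp only [one_pow, inv_one, mul_one, one_mul] at hlim
  refine hlim.congr' ?_
  filter_upwards [self_mem_nhdsWithin] with q hq
  exact (qbeta_eq_fwdDiff_iter hq hh n x).symm
end

section
/- For every real x > 0, every h ∈ ℂ with Re(h) > 1, and every t ∈ ℂ, all the series below converge absolutely and −t · Σ_{m=0}^{∞} q^{hm+x}·exp([x+m]_q·t) + (h−1)(1−q) · Σ_{m=0}^{∞} q^{(h−1)m}·exp([x+m]_q·t) = exp(t/(1−q)) · Σ_{l=0}^{∞} (−1)^l·q^{lx}·((l+h−1)/[l+h−1]_q)·(1/(1−q))^l·t^l/l!. -/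
/-!
With `c = t/(1-q)` one has `[y]_q t = c - q^y c`, so `e^{[x+m]_q t} = e^c e^{-q^{x+m} c}`.
Expanding the second exponential in powers of `c` and summing over `m` first (the double
series converges absolutely when `Re a > 0`, `x ≥ 0`) turns each geometric series into a
closed form:
`∑_m q^{am+b} e^{[x+m]_q t} = e^c ∑_l u_{a,b}(l)` with
`u_{a,b}(l) = (-c)^l/l! · q^{b+lx}/(1-q^{a+l})` (`qgenCoeff`).
Since `-c · u_{h,x}(l) = (l+1) · u_{h-1,0}(l+1)`, the first series of the theorem contributes
`(1-q) ∑_l l · u_{h-1,0}(l)` and the second `(1-q)(h-1) ∑_l u_{h-1,0}(l)`; together this is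
`(1-q) ∑_l (l+h-1) u_{h-1,0}(l)`, which is the right-hand side term by term.
-/

open Complex Finset Filter

open scoped Nat

lemma qcpow_add (q : ℝ) (z w : ℂ) : qcpow q (z + w) = qcpow q z * qcpow q w := by
  simp only [qcpow, add_mul, Complex.exp_add]

lemma qcpow_pow (q : ℝ) (z : ℂ) (n : ℕ) : qcpow q z ^ n = qcpow q (n * z) := by
  rw [qcpow, qcpow, ← Complex.exp_nat_mul, mul_assoc]

lemma norm_qcpow (q : ℝ) (z : ℂ) : ‖qcpow q z‖ = Real.exp (z.re * Real.log q) := by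
  simp [qcpow, Complex.norm_exp, Complex.mul_re]

lemma norm_qcpow_le_one {q : ℝ} (hq0 : 0 < q) (hq1 : q < 1) {z : ℂ} (hz : 0 ≤ z.re) :
    ‖qcpow q z‖ ≤ 1 := by
  rw [norm_qcpow, Real.exp_le_one_iff]
  exact mul_nonpos_of_nonneg_of_nonpos hz (Real.log_neg hq0 hq1).le

lemma norm_qcpow_lt_one {q : ℝ} (hq0 : 0 < q) (hq1 : q < 1) {z : ℂ} (hz : 0 < z.re) :
    ‖qcpow q z‖ < 1 := by
  rw [norm_qcpow, Real.exp_lt_one_iff]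
  exact mul_neg_of_pos_of_neg hz (Real.log_neg hq0 hq1)

lemma ofReal_qnumR (q y : ℝ) : (qnumR q y : ℂ) = qnum q y := by
  simp [qnumR, qnum, qcpow, Complex.ofReal_exp]

lemma exp_qnum_mul {q : ℝ} (hq : (1 : ℂ) - q ≠ 0) (z t : ℂ) :
    Complex.exp (qnum q z * t) =
      Complex.exp (t / (1 - q)) * Complex.exp (-(qcpow q z * (t / (1 - q)))) := by
  rw [← Complex.exp_add, qnum]
  congr 1
  field_simp
  ring

lemma summable_norm_qcpow_mul_add {q : ℝ} (hq0 : 0 < q) (hq1 : q < 1) {a : ℂ} (ha : 0 < a.re)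
    (b : ℂ) : Summable fun m : ℕ => ‖qcpow q (a * m + b)‖ := by
  have hgeom := summable_geometric_of_lt_one (norm_nonneg _) (norm_qcpow_lt_one hq0 hq1 ha)
  refine (hgeom.mul_left ‖qcpow q b‖).congr fun m => ?_
  rw [qcpow_add, mul_comm a, ← qcpow_pow, norm_mul, norm_pow, mul_comm]

noncomputable def qgenCoeff (q : ℝ) (a b : ℂ) (x : ℝ) (c : ℂ) (l : ℕ) : ℂ :=
  (-c) ^ l / (l ! : ℂ) * (qcpow q (b + l * x) / (1 - qcpow q (a + l)))

lemma hasSum_qcpow_mul_exp_neg_qcpow_mul {q : ℝ} (hq0 : 0 < q) (hq1 : q < 1) {a : ℂ}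
    (ha : 0 < a.re) (b c : ℂ) {x : ℝ} (hx : 0 ≤ x) :
    Summable (qgenCoeff q a b x c) ∧
    HasSum (fun m : ℕ => qcpow q (a * m + b) * Complex.exp (-(qcpow q (x + m) * c)))
      (∑' l, qgenCoeff q a b x c l) := by
  set F : ℕ × ℕ → ℂ := fun p =>
    qcpow q (a * p.1 + b) * ((-c) ^ p.2 / (p.2 ! : ℂ) * qcpow q (p.2 * (x + p.1))) with hF_def
  have hF : Summable F := by
    refine Summable.of_norm_bounded (Summable.mul_of_nonneg
      (summable_norm_qcpow_mul_add hq0 hq1 ha b) (NormedSpace.norm_expSeries_div_summable (-c))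
      (fun _ => norm_nonneg _) (fun _ => norm_nonneg _)) fun p => ?_
    have hre : (0 : ℝ) ≤ ((p.2 : ℂ) * (x + p.1)).re := by
      simp only [mul_re, natCast_re, add_re, ofReal_re, natCast_im, add_im, ofReal_im, add_zero,
        mul_zero, sub_zero]
      positivity
    rw [hF_def, norm_mul, norm_mul]
    gcongr
    exact mul_le_of_le_one_right (norm_nonneg _) (norm_qcpow_le_one hq0 hq1 hre)
  have h_fiber_l (m : ℕ) : HasSum (fun l => F (m, l))
      (qcpow q (a * m + b) * Complex.exp (-(qcpow q (x + m) * c))) := by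
    rw [Complex.exp_eq_exp_ℂ]
    refine ((NormedSpace.expSeries_div_hasSum_exp (-(qcpow q (x + m) * c))).mul_left
      (qcpow q (a * m + b))).congr_fun fun l => ?_
    rw [← mul_neg, mul_pow, qcpow_pow]
    ring
  have h_fiber_m (l : ℕ) : HasSum (fun m => F (m, l)) (qgenCoeff q a b x c l) := by
    have hlt : ‖qcpow q (a + l)‖ < 1 :=
      norm_qcpow_lt_one hq0 hq1 (by simp only [add_re, natCast_re]; positivity)
    have h_geom := (hasSum_geometric_of_norm_lt_one hlt).mul_left
      ((-c) ^ l / (l ! : ℂ) * qcpow q (b + l * x))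
    rw [mul_assoc, ← div_eq_mul_inv, ← qgenCoeff] at h_geom
    refine h_geom.congr_fun fun m => ?_
    simp only [hF_def, qcpow_pow]
    rw [mul_left_comm, ← qcpow_add, mul_assoc, ← qcpow_add]
    ring_nf
  have h_swap : HasSum (F ∘ Equiv.prodComm ℕ ℕ) (∑' p, F p) :=
    (Equiv.prodComm ℕ ℕ).hasSum_iff.mpr hF.hasSum
  have h_l := h_swap.prod_fiberwise h_fiber_m
  refine ⟨h_l.summable, ?_⟩
  rw [h_l.tsum_eq]
  exact hF.hasSum.prod_fiberwise h_fiber_l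

lemma hasSum_qcpow_mul_exp_qnumR {q : ℝ} (hq0 : 0 < q) (hq1 : q < 1) {a : ℂ} (ha : 0 < a.re)
    (b : ℂ) {x : ℝ} (hx : 0 ≤ x) (t : ℂ) :
    Summable (qgenCoeff q a b x (t / (1 - q))) ∧
    HasSum (fun m : ℕ => qcpow q (a * m + b) * Complex.exp (qnumR q (x + m) * t))
      (Complex.exp (t / (1 - q)) * ∑' l, qgenCoeff q a b x (t / (1 - q)) l) := by
  have hq : (1 : ℂ) - q ≠ 0 := by exact_mod_cast (sub_pos.mpr hq1).ne'
  obtain ⟨h_coeff, h_series⟩ :=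
    hasSum_qcpow_mul_exp_neg_qcpow_mul hq0 hq1 ha b (t / (1 - q)) hx
  refine ⟨h_coeff, (h_series.mul_left (Complex.exp (t / (1 - q)))).congr_fun fun m => ?_⟩
  rw [ofReal_qnumR, exp_qnum_mul hq]
  push_cast
  ring

lemma qgenCoeff_succ (q : ℝ) (a b : ℂ) (x : ℝ) (c : ℂ) (l : ℕ) :
    -c * qgenCoeff q (a + 1) (b + x) x c l = (l + 1) * qgenCoeff q a b x c (l + 1) := by
  simp only [qgenCoeff, Nat.factorial_succ, pow_succ]
  push_cast
  rw [show b + x + l * x = b + (l + 1) * x by ring, show a + 1 + l = a + (l + 1) by ring]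
  field_simp

lemma qbeta_gen_term_eq_qgenCoeff {q : ℝ} (hq : (1 : ℂ) - q ≠ 0) (h : ℂ) (x : ℝ) (t : ℂ)
    (l : ℕ) :
    (-1) ^ l * qcpow q (l * x) * ((l + h - 1) / qnum q (l + h - 1)) * (1 / (1 - q)) ^ l *
        t ^ l / (l ! : ℂ) =
      (1 - q) * ((l + (h - 1)) * qgenCoeff q (h - 1) 0 x (t / (1 - q)) l) := by
  rw [qgenCoeff, qnum, zero_add, show (l : ℂ) + h - 1 = h - 1 + l by ring,
    neg_pow (t / _), div_pow, div_pow]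
  field_simp
  ring

/-- the generating function identity
`-t ∑ q^{hm+x} e^{[x+m]_q t} + (h-1)(1-q) ∑ q^{(h-1)m} e^{[x+m]_q t}
  = e^{t/(1-q)} ∑_l (-1)^l q^{lx} ((l+h-1)/[l+h-1]_q) (1/(1-q))^l t^l/l!`,
with all series converging absolutely. -/
theorem qbeta_gen_fun_expansion (q : ℝ) (hq0 : 0 < q) (hq1 : q < 1)
    (h : ℂ) (hh : 1 < h.re) (x : ℝ) (hx : 0 < x) (t : ℂ) :
    Summable (fun m : ℕ => qcpow q (h * (m : ℂ) + (x : ℂ)) *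
      Complex.exp ((qnumR q (x + m) : ℂ) * t)) ∧
    Summable (fun m : ℕ => qcpow q ((h - 1) * (m : ℂ)) *
      Complex.exp ((qnumR q (x + m) : ℂ) * t)) ∧
    Summable (fun l : ℕ => (-1) ^ l * qcpow q ((l : ℂ) * (x : ℂ)) *
      (((l : ℂ) + h - 1) / qnum q ((l : ℂ) + h - 1)) *
      (1 / (1 - (q : ℂ))) ^ l * t ^ l / (l.factorial : ℂ)) ∧
    (-t * ∑' m : ℕ, qcpow q (h * (m : ℂ) + (x : ℂ)) *
        Complex.exp ((qnumR q (x + m) : ℂ) * t)) +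
      (h - 1) * (1 - (q : ℂ)) *
        (∑' m : ℕ, qcpow q ((h - 1) * (m : ℂ)) *
          Complex.exp ((qnumR q (x + m) : ℂ) * t)) =
      Complex.exp (t / (1 - (q : ℂ))) *
        ∑' l : ℕ, (-1) ^ l * qcpow q ((l : ℂ) * (x : ℂ)) *
          (((l : ℂ) + h - 1) / qnum q ((l : ℂ) + h - 1)) *
          (1 / (1 - (q : ℂ))) ^ l * t ^ l / (l.factorial : ℂ) := by
  have hq : (1 : ℂ) - q ≠ 0 := by exact_mod_cast (sub_pos.mpr hq1).ne'
  obtain ⟨hg₁, hS₁⟩ := hasSum_qcpow_mul_exp_qnumR hq0 hq1 (a := h) (by linarith) x hx.le t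
  obtain ⟨hg, hS₂⟩ :=
    hasSum_qcpow_mul_exp_qnumR hq0 hq1 (a := h - 1) (by simpa using hh) 0 hx.le t
  simp only [add_zero] at hS₂
  set c := t / (1 - q)
  have h_shift : HasSum (fun l : ℕ => (1 - q) * (l * qgenCoeff q (h - 1) 0 x c l))
      (-t * ∑' l, qgenCoeff q h x x c l) := by
    rw [← hasSum_nat_add_iff' 1, Finset.sum_range_one, Nat.cast_zero, zero_mul, mul_zero,
      sub_zero]
    refine (hg₁.hasSum.mul_left (-t)).congr_fun fun l => ?_
    have h_succ := qgenCoeff_succ q (h - 1) 0 x c l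
    rw [sub_add_cancel, zero_add] at h_succ
    rw [show -t = (1 - q) * -c by simp [c, field], mul_assoc, h_succ]
    push_cast
    ring
  have h_rhs := (h_shift.add (hg.hasSum.mul_left ((h - 1) * (1 - q)))).congr_fun fun l =>
    (qbeta_gen_term_eq_qgenCoeff hq h x t l).trans (by ring)
  refine ⟨hS₁.summable, hS₂.summable, h_rhs.summable, ?_⟩
  rw [hS₁.tsum_eq, hS₂.tsum_eq, h_rhs.tsum_eq]
  ring
end
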